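/- Let K ≤ G be any subgroup, 1 ≤ i₁ < ⋯ < i_k ≤ n and g₁,…,g_k ∈ G, with either k ≥ 2 or K ≠ {e}. Then H^K(i₁^{g₁K},…,i_k^{g_kK}) = (⋂_{j=2}^{k} H(i₁, i_j, g_j g₁⁻¹)) ∩ (⋂_{κ ∈ K, κ ≠ e} H(i₁, i₁, g₁ κ g₁⁻¹)). In particular every such subspace H^K(i₁^{g₁K},…,i_k^{g_kK}) is an intersection of members of the generalized Dowling arrangement 𝓗(n,G,V). -/

import Mathlib

variable {G : Type*} [Group G] {V : Type*} [AddCommGroup V] [Module ℂ V]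

/-- The subspace `Fix(H)` of vectors fixed by every element of the subgroup `H`
under the representation `ρ`. -/
def fixedSpace (ρ : Representation ℂ G V) (H : Subgroup G) : Submodule ℂ V where
  carrier := {v | ∀ h ∈ H, ρ h v = v}
  add_mem' := by
    intro a b ha hb h hh
    rw [map_add, ha h hh, hb h hh]
  zero_mem' := by
    intro h hh
    exact map_zero _
  smul_mem' := by
    intro c a ha h hh
    rw [map_smul, ha h hh]

/-- A subgroup `H ≤ G` is closed (w.r.t. `ρ`) if every subgroup `K` with `H ≤ K`
and `Fix(K) = Fix(H)` satisfies `K = H`. -/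
def IsClosedSubgroup (ρ : Representation ℂ G V) (H : Subgroup G) : Prop :=
  ∀ K : Subgroup G, H ≤ K → fixedSpace ρ K = fixedSpace ρ H → K = H

/-- The subspace `H^K(i₁^{g₁K},…,i_k^{g_kK})` of `V^n`: tuples `w` such that there is
`v ∈ Fix(K)` with `w (i j) = ρ (g j) v` for all `j`. -/
def HKsub (ρ : Representation ℂ G V) {n k : ℕ} (K : Subgroup G)
    (i : Fin k → Fin n) (g : Fin k → G) : Submodule ℂ (Fin n → V) where
  carrier := {w | ∃ v, v ∈ fixedSpace ρ K ∧ ∀ j, w (i j) = ρ (g j) v}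
  add_mem' := by
    rintro w₁ w₂ ⟨v₁, hv₁, h₁⟩ ⟨v₂, hv₂, h₂⟩
    exact ⟨v₁ + v₂, (fixedSpace ρ K).add_mem hv₁ hv₂, fun j => by
      simp only [Pi.add_apply, map_add, h₁ j, h₂ j]⟩
  zero_mem' :=
    ⟨0, (fixedSpace ρ K).zero_mem, fun j => by simp⟩
  smul_mem' := by
    rintro c w ⟨v, hv, h⟩
    exact ⟨c • v, (fixedSpace ρ K).smul_mem c hv, fun j => by
      simp only [Pi.smul_apply, map_smul, h j]⟩

/-- The subspace `H(i,j,g) = {(v₁,…,v_n) ∈ V^n : v_j = ρ(g) v_i}` of `V^n`. -/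
def Hsub (ρ : Representation ℂ G V) {n : ℕ} (i j : Fin n) (g : G) :
    Submodule ℂ (Fin n → V) where
  carrier := {w | w j = ρ g (w i)}
  add_mem' := by
    intro w₁ w₂ h₁ h₂
    simp only [Set.mem_setOf_eq, Pi.add_apply, map_add] at *
    rw [h₁, h₂]
  zero_mem' := by simp
  smul_mem' := by
    intro c w hw
    simp only [Set.mem_setOf_eq, Pi.smul_apply, map_smul] at *
    rw [hw]

/-- The generalized Dowling arrangement 𝓗(n,G,V): the subspaces `H(i,j,g)` for
`i < j`, `g ∈ G`, together with the subspaces `H(i,i,g)` for `g ≠ e`. -/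
def DowlingArrangement (ρ : Representation ℂ G V) (n : ℕ) :
    Set (Submodule ℂ (Fin n → V)) :=
  {W | (∃ i j : Fin n, ∃ g : G, i < j ∧ W = Hsub ρ i j g) ∨
       (∃ i : Fin n, ∃ g : G, g ≠ 1 ∧ W = Hsub ρ i i g)}

section

variable {ρ : Representation ℂ G V}

theorem mem_Hsub {n : ℕ} {i j : Fin n} {g : G} {w : Fin n → V} :
    w ∈ Hsub ρ i j g ↔ w j = ρ g (w i) :=
  Iff.rfl

/-- `Fix(K) = ρ(g)⁻¹ Fix(gKg⁻¹)`. -/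
theorem inv_apply_mem_fixedSpace_iff {K : Subgroup G} {g : G} {v : V} :
    ρ g⁻¹ v ∈ fixedSpace ρ K ↔ ∀ κ ∈ K, κ ≠ 1 → v = ρ (g * κ * g⁻¹) v := by
  refine forall₂_congr fun κ _ => ?_
  by_cases hκ : κ = 1
  · simp [hκ]
  · rw [map_mul, map_mul, Module.End.mul_apply, Module.End.mul_apply,
      ← ρ.inv_apply_eq_iff, eq_comm]
    simp [hκ]

/-- The witness `v ∈ Fix(K)` is forced to be `ρ(g₁)⁻¹ w_{i₁}`. -/
theorem mem_HKsub_iff {n k : ℕ} {K : Subgroup G} {i : Fin (k + 1) → Fin n}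
    {g : Fin (k + 1) → G} {w : Fin n → V} :
    w ∈ HKsub ρ K i g ↔ ρ (g 0)⁻¹ (w (i 0)) ∈ fixedSpace ρ K ∧
      ∀ r : Fin k, w (i r.succ) = ρ (g r.succ * (g 0)⁻¹) (w (i 0)) := by
  constructor
  · rintro ⟨v, hv, h⟩
    obtain rfl : v = ρ (g 0)⁻¹ (w (i 0)) := by rw [h 0, ρ.inv_self_apply]
    exact ⟨hv, fun r => by rw [h r.succ, map_mul, Module.End.mul_apply]⟩
  · rintro ⟨hv, h⟩
    refine ⟨_, hv, Fin.cases (by simp) fun r => ?_⟩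
    rw [h r, map_mul, Module.End.mul_apply]

theorem HKsub_eq_iInf_Hsub {n k : ℕ} (K : Subgroup G) (i : Fin (k + 1) → Fin n)
    (g : Fin (k + 1) → G) :
    HKsub ρ K i g =
      (⨅ r : Fin k, Hsub ρ (i 0) (i r.succ) (g r.succ * (g 0)⁻¹)) ⊓
      (⨅ κ ∈ {x : G | x ∈ K ∧ x ≠ 1}, Hsub ρ (i 0) (i 0) (g 0 * κ * (g 0)⁻¹)) := by
  ext w
  simp only [mem_HKsub_iff, inv_apply_mem_fixedSpace_iff, Submodule.mem_inf,
    Submodule.mem_iInf, mem_Hsub, Set.mem_ofPred_eq, and_imp]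
  exact and_comm

theorem Hsub_mem_DowlingArrangement_of_lt {n : ℕ} {i j : Fin n} (hij : i < j) (g : G) :
    Hsub ρ i j g ∈ DowlingArrangement ρ n :=
  Or.inl ⟨i, j, g, hij, rfl⟩

theorem Hsub_self_mem_DowlingArrangement {n : ℕ} (i : Fin n) {g : G} (hg : g ≠ 1) :
    Hsub ρ i i g ∈ DowlingArrangement ρ n :=
  Or.inr ⟨i, g, hg, rfl⟩

end

theorem HKsub_eq_inf_DowlingArrangement
    (ρ : Representation ℂ G V)
    (n k : ℕ) (K : Subgroup G) (i : Fin (k + 1) → Fin n) (hi : StrictMono i)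
    (g : Fin (k + 1) → G) (hcond : 1 ≤ k ∨ K ≠ ⊥) :
    HKsub ρ K i g =
      (⨅ r : Fin k, Hsub ρ (i 0) (i r.succ) (g r.succ * (g 0)⁻¹)) ⊓
      (⨅ κ ∈ {x : G | x ∈ K ∧ x ≠ 1}, Hsub ρ (i 0) (i 0) (g 0 * κ * (g 0)⁻¹)) ∧
    ∃ S : Set (Submodule ℂ (Fin n → V)),
      S ⊆ DowlingArrangement ρ n ∧ S.Nonempty ∧ HKsub ρ K i g = sInf S := by
  refine ⟨HKsub_eq_iInf_Hsub K i g,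
    (Set.range fun r : Fin k => Hsub ρ (i 0) (i r.succ) (g r.succ * (g 0)⁻¹)) ∪
      ((fun κ => Hsub ρ (i 0) (i 0) (g 0 * κ * (g 0)⁻¹)) '' {x : G | x ∈ K ∧ x ≠ 1}),
    ?_, ?_, ?_⟩
  · rintro W (⟨r, rfl⟩ | ⟨κ, ⟨-, hκ⟩, rfl⟩)
    · exact Hsub_mem_DowlingArrangement_of_lt (hi r.succ_pos) _
    · exact Hsub_self_mem_DowlingArrangement _ (conj_eq_one_iff.not.mpr hκ)
  · rcases hcond with hk | hK
    · exact ⟨_, Or.inl (Set.mem_range_self (⟨0, hk⟩ : Fin k))⟩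
    · obtain ⟨⟨κ, hκK⟩, hκ⟩ := Subgroup.ne_bot_iff_exists_ne_one.mp hK
      exact ⟨_, Or.inr ⟨κ, ⟨hκK, fun h => hκ (Subtype.ext h)⟩, rfl⟩⟩
  · rw [HKsub_eq_iInf_Hsub, sInf_union, sInf_range, sInf_image]
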